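/- Let Q = B_∞ = {x ∈ ℝⁿ : ‖x‖_∞ ≤ 1} and ψ(x) = ½‖x‖². Then for every ε ≥ 0, P(ERᶜ(ε)) ≤ ε·n + ½ε²·n. -/

import Mathlib

/-!
If `|gᵢ| > ε` for every `i`, the unique maximizer of `⟪g, x⟫` over the cube is the sign vertex
`z = sign g`, and `z` stays optimal after subtracting `ε ‖x‖² / 2`: for `|yᵢ| ≤ 1`,
`|gᵢ| - ε/2 - (gᵢ yᵢ - ε yᵢ²/2) ≥ (1 - |yᵢ|)(|gᵢ| - ε (1 + |yᵢ|)/2) ≥ 0`.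
So exact regularization can only fail on the union of the slabs `|gᵢ| ≤ ε`, and each slab has
Gaussian measure at most `2ε / √(2π) ≤ ε`.
-/

open MeasureTheory Set Metric Pointwise RealInnerProductSpace

noncomputable section

/-- Standard Gaussian measure of a set in `ℝⁿ`. -/
def gauss {n : ℕ} (B : Set (EuclideanSpace ℝ (Fin n))) : ℝ :=
  ∫ x in B, (2 * Real.pi) ^ (-(n : ℝ) / 2) * Real.exp (-‖x‖ ^ 2 / 2)

/-- Solution set of `P₀(g)`: minimize `-g·x` over `Q`. -/
def sol0 {n : ℕ} (Q : Set (EuclideanSpace ℝ (Fin n))) (g : EuclideanSpace ℝ (Fin n)) :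
    Set (EuclideanSpace ℝ (Fin n)) :=
  {x ∈ Q | ∀ y ∈ Q, -⟪g, x⟫ ≤ -⟪g, y⟫}

/-- Solution set of `P_ε(g)`: minimize `-g·x + εψ(x)` over `Q` (here `dom ψ = ℝⁿ`). -/
def solReg {n : ℕ} (Q : Set (EuclideanSpace ℝ (Fin n))) (ψ : EuclideanSpace ℝ (Fin n) → ℝ)
    (ε : ℝ) (g : EuclideanSpace ℝ (Fin n)) : Set (EuclideanSpace ℝ (Fin n)) :=
  {x ∈ Q | ∀ y ∈ Q, -⟪g, x⟫ + ε * ψ x ≤ -⟪g, y⟫ + ε * ψ y}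

/-- The exact regularization event: `P₀(g)` has a unique solution which also solves `P_ε(g)`. -/
def ER {n : ℕ} (Q : Set (EuclideanSpace ℝ (Fin n))) (ψ : EuclideanSpace ℝ (Fin n) → ℝ)
    (ε : ℝ) : Set (EuclideanSpace ℝ (Fin n)) :=
  {g | ∃ z, sol0 Q g = {z} ∧ z ∈ solReg Q ψ ε g}

/-- The unit `ℓ∞` ball in `ℝⁿ`. -/
def Binf (n : ℕ) : Set (EuclideanSpace ℝ (Fin n)) := {x | ∀ i, |x i| ≤ 1}

open ProbabilityTheory

theorem inner_eq_sum_mul {ι : Type*} [Fintype ι] (x y : EuclideanSpace ℝ ι) :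
    ⟪x, y⟫ = ∑ i, x i * y i := by
  simp [PiLp.inner_apply, mul_comm]

theorem mul_le_abs_of_abs_le_one {a y : ℝ} (hy : |y| ≤ 1) : a * y ≤ |a| :=
  calc a * y ≤ |a| * |y| := (le_abs_self _).trans (abs_mul a y).le
    _ ≤ |a| := mul_le_of_le_one_right (abs_nonneg a) hy

theorem mul_sub_half_mul_sq_le {a y ε : ℝ} (hy : |y| ≤ 1) (hε : ε ≤ |a|) :
    a * y - ε * y ^ 2 / 2 ≤ |a| - ε / 2 := by
  have hay : a * y ≤ |a| * |y| := (le_abs_self _).trans (abs_mul a y).le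
  have hfac : 0 ≤ (1 - |y|) * (|a| - ε * (1 + |y|) / 2) := by
    refine mul_nonneg (by linarith) ?_
    rcases le_total 0 ε with h | h <;> nlinarith [abs_nonneg y, abs_nonneg a]
  have hsq : ε * y ^ 2 = ε * |y| ^ 2 := by rw [sq_abs]
  nlinarith

namespace Binf

variable {n : ℕ}

def signVertex (g : EuclideanSpace ℝ (Fin n)) : EuclideanSpace ℝ (Fin n) :=
  WithLp.toLp 2 fun i => (SignType.sign (g i) : ℝ)

theorem abs_signVertex_apply {g : EuclideanSpace ℝ (Fin n)} {i : Fin n} (hgi : g i ≠ 0) :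
    |signVertex g i| = 1 := by
  rcases hgi.lt_or_gt with h | h <;> simp [signVertex, h]

theorem signVertex_mem {g : EuclideanSpace ℝ (Fin n)} (hg : ∀ i, g i ≠ 0) :
    signVertex g ∈ Binf n :=
  fun i => (abs_signVertex_apply (hg i)).le

theorem inner_signVertex (g : EuclideanSpace ℝ (Fin n)) :
    ⟪g, signVertex g⟫ = ∑ i, |g i| := by
  simp [inner_eq_sum_mul, signVertex, self_mul_sign]

theorem inner_le_of_mem (g : EuclideanSpace ℝ (Fin n)) {y : EuclideanSpace ℝ (Fin n)}
    (hy : y ∈ Binf n) : ⟪g, y⟫ ≤ ∑ i, |g i| := by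
  rw [inner_eq_sum_mul]
  exact Finset.sum_le_sum fun i _ => mul_le_abs_of_abs_le_one (hy i)

theorem sol0_eq_singleton {g : EuclideanSpace ℝ (Fin n)} (hg : ∀ i, g i ≠ 0) :
    sol0 (Binf n) g = {signVertex g} := by
  have hsign : signVertex g ∈ sol0 (Binf n) g :=
    ⟨signVertex_mem hg, fun y hy => by
      rw [neg_le_neg_iff, inner_signVertex]; exact inner_le_of_mem g hy⟩
  refine eq_singleton_iff_unique_mem.2 ⟨hsign, fun y hy => ?_⟩
  -- Optimality forces `g i * y i = |g i| = g i * signVertex g i` in every coordinate.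
  have hsum : ∑ i, g i * y i = ∑ i, |g i| := by
    have := hy.2 _ hsign.1
    rw [neg_le_neg_iff, inner_signVertex, inner_eq_sum_mul] at this
    exact le_antisymm (by simpa [inner_eq_sum_mul] using inner_le_of_mem g hy.1) this
  have hcoord := (Finset.sum_eq_sum_iff_of_le fun i _ => mul_le_abs_of_abs_le_one (hy.1 i)).1 hsum
  ext i
  refine mul_left_cancel₀ (hg i) ((hcoord i (Finset.mem_univ i)).trans ?_)
  simp [signVertex, self_mul_sign]

theorem signVertex_mem_solReg {g : EuclideanSpace ℝ (Fin n)} {ε : ℝ} (hg : ∀ i, g i ≠ 0)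
    (hε : ∀ i, ε ≤ |g i|) : signVertex g ∈ solReg (Binf n) (fun x => ‖x‖ ^ 2 / 2) ε g := by
  refine ⟨signVertex_mem hg, fun y hy => ?_⟩
  have hsq (x : EuclideanSpace ℝ (Fin n)) : ε * (‖x‖ ^ 2 / 2) = ∑ i, ε * x i ^ 2 / 2 := by
    simp only [EuclideanSpace.norm_sq_eq, Real.norm_eq_abs, sq_abs, Finset.mul_sum, Finset.sum_div,
      mul_div_assoc]
  have hcoord :
      ∑ i, (g i * y i - ε * y i ^ 2 / 2) ≤ ∑ i, (|g i| - ε * signVertex g i ^ 2 / 2) :=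
    Finset.sum_le_sum fun i _ => by
      rw [← sq_abs (signVertex g i), abs_signVertex_apply (hg i), one_pow, mul_one]
      exact mul_sub_half_mul_sq_le (hy i) (hε i)
  simp only [Finset.sum_sub_distrib] at hcoord
  rw [hsq, hsq, inner_signVertex, inner_eq_sum_mul]
  linarith

theorem mem_ER {g : EuclideanSpace ℝ (Fin n)} {ε : ℝ} (hε : 0 ≤ ε) (hg : ∀ i, ε < |g i|) :
    g ∈ ER (Binf n) (fun x => ‖x‖ ^ 2 / 2) ε := by
  have hg0 : ∀ i, g i ≠ 0 := fun i h => by simpa [h] using hε.trans_lt (hg i)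
  exact ⟨signVertex g, sol0_eq_singleton hg0, signVertex_mem_solReg hg0 fun i => (hg i).le⟩

theorem compl_ER_subset {ε : ℝ} (hε : 0 ≤ ε) :
    (ER (Binf n) (fun x => ‖x‖ ^ 2 / 2) ε)ᶜ ⊆
      ⋃ i, {g : EuclideanSpace ℝ (Fin n) | g i ∈ Icc (-ε) ε} := by
  intro g hg
  by_contra hslab
  simp only [mem_iUnion, mem_ofPred_eq, mem_Icc, ← abs_le, not_exists, not_le] at hslab
  exact hg (mem_ER hε hslab)

end Binf

theorem gaussianReal_le_mul_volume (μ : ℝ) {v : NNReal} (hv : v ≠ 0) (s : Set ℝ) :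
    gaussianReal μ v s ≤ ENNReal.ofReal (√(2 * Real.pi * v))⁻¹ * volume s := by
  rw [gaussianReal_apply μ hv, ← setLIntegral_const]
  refine setLIntegral_mono measurable_const fun x _ => ENNReal.ofReal_le_ofReal ?_
  rw [gaussianPDFReal_def]
  refine mul_le_of_le_one_right (by positivity) (Real.exp_le_one_iff.2 ?_)
  exact div_nonpos_of_nonpos_of_nonneg (neg_nonpos.2 (sq_nonneg _)) (by positivity)

theorem gaussianReal_Icc_neg_le {ε : ℝ} (hε : 0 ≤ ε) :
    gaussianReal 0 1 (Icc (-ε) ε) ≤ ENNReal.ofReal ε := by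
  have hsqrt : 2 ≤ √(2 * Real.pi * (1 : NNReal)) :=
    (Real.le_sqrt (by norm_num) (by positivity)).2 (by push_cast; nlinarith [Real.two_le_pi])
  refine (gaussianReal_le_mul_volume 0 one_ne_zero _).trans ?_
  rw [Real.volume_Icc, ← ENNReal.ofReal_mul (by positivity)]
  refine ENNReal.ofReal_le_ofReal ?_
  rw [inv_mul_le_iff₀ (by positivity)]
  nlinarith

section GaussianDensity

variable {ι : Type*} [Fintype ι]

theorem prod_gaussianPDFReal_eq (x : EuclideanSpace ℝ ι) :
    ∏ i, gaussianPDFReal 0 1 (x i) =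
      (2 * Real.pi) ^ (-(Fintype.card ι : ℝ) / 2) * Real.exp (-‖x‖ ^ 2 / 2) := by
  have hconst :
      (2 * Real.pi) ^ (-(Fintype.card ι : ℝ) / 2) = (√(2 * Real.pi))⁻¹ ^ Fintype.card ι := by
    rw [Real.sqrt_eq_rpow, ← Real.inv_rpow (by positivity), ← Real.rpow_natCast,
      ← Real.rpow_mul (by positivity), Real.inv_rpow (by positivity),
      ← Real.rpow_neg (by positivity)]
    ring_nf
  simp only [gaussianPDFReal_def, NNReal.coe_one, mul_one, sub_zero, Finset.prod_mul_distrib,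
    Finset.prod_const, Finset.card_univ]
  rw [hconst, ← Real.exp_sum, EuclideanSpace.norm_sq_eq]
  simp only [Real.norm_eq_abs, sq_abs, neg_div, Finset.sum_div, Finset.sum_neg_distrib]

theorem pi_gaussianReal_eq_withDensity :
    Measure.pi (fun _ : ι => gaussianReal 0 1) =
      (volume : Measure (ι → ℝ)).withDensity
        fun y => ENNReal.ofReal (∏ i, gaussianPDFReal 0 1 (y i)) := by
  refine Measure.pi_eq fun t ht => ?_
  have hbox : MeasurableSet (univ.pi t) := MeasurableSet.univ_pi ht
  have hindicator : (univ.pi t).indicator (fun y : ι → ℝ => ∏ i, gaussianPDFReal 0 1 (y i)) =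
      fun y => ∏ i, (t i).indicator (gaussianPDFReal 0 1) (y i) := by
    ext y
    by_cases hy : y ∈ univ.pi t
    · rw [indicator_of_mem hy]
      exact Finset.prod_congr rfl fun i _ => (indicator_of_mem (hy i trivial) _).symm
    · obtain ⟨i, hi⟩ : ∃ i, y i ∉ t i := by simpa [mem_univ_pi] using hy
      rw [indicator_of_notMem hy, Finset.prod_eq_zero (Finset.mem_univ i)
        (indicator_of_notMem hi _)]
  rw [withDensity_apply _ hbox, volume_pi, ← ofReal_integral_eq_lintegral_ofReal
      (Integrable.fintype_prod fun _ => integrable_gaussianPDFReal 0 1).integrableOn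
      (ae_of_all _ fun y => Finset.prod_nonneg fun i _ => gaussianPDFReal_nonneg 0 1 (y i)),
    ← integral_indicator hbox, hindicator, integral_fintype_prod_eq_prod,
    ENNReal.ofReal_prod_of_nonneg fun i _ =>
      integral_nonneg (indicator_nonneg fun x _ => gaussianPDFReal_nonneg 0 1 x)]
  refine Finset.prod_congr rfl fun i _ => ?_
  rw [gaussianReal_apply_eq_integral 0 one_ne_zero, integral_indicator (ht i)]

theorem stdGaussian_eq_withDensity :
    stdGaussian (EuclideanSpace ℝ ι) =
      volume.withDensity fun x => ENNReal.ofReal (∏ i, gaussianPDFReal 0 1 (x i)) := by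
  have hρ : Measurable fun x : EuclideanSpace ℝ ι =>
      ENNReal.ofReal (∏ i, gaussianPDFReal 0 1 (x i)) :=
    (Finset.measurable_prod _ fun i _ => (measurable_gaussianPDFReal 0 1).comp
      (by fun_prop)).ennreal_ofReal
  have hpres := PiLp.volume_preserving_toLp ι
  ext s hs
  rw [← map_pi_eq_stdGaussian, pi_gaussianReal_eq_withDensity,
    Measure.map_apply hpres.measurable hs, withDensity_apply _ (hpres.measurable hs),
    withDensity_apply _ hs]
  exact hpres.setLIntegral_comp_preimage hs hρ

theorem stdGaussian_coord_preimage (i : ι) {s : Set ℝ} (hs : MeasurableSet s) :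
    stdGaussian (EuclideanSpace ℝ ι) {x | x i ∈ s} = gaussianReal 0 1 s := by
  rw [← map_pi_eq_stdGaussian]
  change Measure.map _ _ ((fun x : EuclideanSpace ℝ ι => x i) ⁻¹' s) = _
  rw [Measure.map_apply (PiLp.volume_preserving_toLp ι).measurable
    (hs.preimage (f := fun x : EuclideanSpace ℝ ι => x i) (by fun_prop))]
  exact (measurePreserving_eval _ i).measure_preimage hs.nullMeasurableSet

end GaussianDensity

theorem gauss_eq_toReal_stdGaussian {n : ℕ} (B : Set (EuclideanSpace ℝ (Fin n))) :
    gauss B = (stdGaussian (EuclideanSpace ℝ (Fin n)) B).toReal := by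
  have hdensity (x : EuclideanSpace ℝ (Fin n)) :
      (2 * Real.pi) ^ (-(n : ℝ) / 2) * Real.exp (-‖x‖ ^ 2 / 2) =
        ∏ i, gaussianPDFReal 0 1 (x i) := by
    rw [prod_gaussianPDFReal_eq, Fintype.card_fin]
  simp only [gauss, hdensity]
  rw [stdGaussian_eq_withDensity, withDensity_apply', integral_eq_lintegral_of_nonneg_ae
    (ae_of_all _ fun x => Finset.prod_nonneg fun i _ => gaussianPDFReal_nonneg 0 1 (x i))]
  exact (Finset.measurable_prod _ fun i _ => (measurable_gaussianPDFReal 0 1).comp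
      (by fun_prop)).aestronglyMeasurable

/-- Upper bound on the failure probability of exact regularization for the `ℓ∞` ball with
quadratic regularization. -/
theorem stmt17 {n : ℕ} (ε : ℝ) (hε : 0 ≤ ε) :
    gauss (ER (Binf n) (fun x => ‖x‖ ^ 2 / 2) ε)ᶜ ≤ ε * n + ε ^ 2 * n / 2 := by
  set μ := stdGaussian (EuclideanSpace ℝ (Fin n))
  set failure := (ER (Binf n) (fun x => ‖x‖ ^ 2 / 2) ε)ᶜ
  have hslab (i : Fin n) : μ {g | g i ∈ Icc (-ε) ε} ≤ ENNReal.ofReal ε := by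
    rw [stdGaussian_coord_preimage i measurableSet_Icc]
    exact gaussianReal_Icc_neg_le hε
  have hunion : μ failure ≤ ENNReal.ofReal (ε * n) :=
    calc μ failure
        ≤ μ (⋃ i, {g | g i ∈ Icc (-ε) ε}) := measure_mono (Binf.compl_ER_subset hε)
      _ ≤ ∑ i, μ {g | g i ∈ Icc (-ε) ε} := measure_iUnion_fintype_le _ _
      _ ≤ ∑ _i : Fin n, ENNReal.ofReal ε := Finset.sum_le_sum fun i _ => hslab i
      _ = ENNReal.ofReal (ε * n) := by simp [ENNReal.ofReal_mul hε, mul_comm]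
  calc gauss failure = (μ failure).toReal := gauss_eq_toReal_stdGaussian _
    _ ≤ ε * n := ENNReal.toReal_le_of_le_ofReal (by positivity) hunion
    _ ≤ ε * n + ε ^ 2 * n / 2 := le_add_of_nonneg_right (by positivity)
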